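/- arXiv:2404.15996 — 3 statements merged into one kernel-verified Lean document; each statement's English description precedes it below -/
import Mathlib

section
/- If M is an (ε, δ)-differentially private randomized mechanism with ε, δ < 1, and each agent's utility function maps outcomes to [0,1], then M is (ε, δ)-truthful: for every agent i, every true utility U_i, every misreport u'_i and every profile u_{-i} of other reports, E[U_i(M(u_i, u_{-i}))] ≥ (1−ε)·E[U_i(M(u'_i, u_{-i}))] − δ. -/
/-!
Differential privacy bounds the probability of every event, in particular of every
super-level set `{t < U}` of the utility. By the layer-cake formula
`E[U] = ∫₀¹ P[t < U] dt` this bound integrates to `E_ν[U] ≤ e^ε E_μ[U] + δ`, where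
`μ` and `ν` are the output distributions under the truthful report and the misreport; then
`e^{-ε} ≥ 1 - ε` turns it into the truthfulness inequality.
-/

open MeasureTheory Real

namespace MeasureTheory

variable {Z : Type*} [MeasurableSpace Z]

lemma measureReal_le_mul_add_of_le {μ ν : Measure Z} [IsFiniteMeasure μ] {O : Set Z}
    {c δ : ℝ} (hc : 0 ≤ c) (hδ : 0 ≤ δ)
    (h : ν O ≤ ENNReal.ofReal c * μ O + ENNReal.ofReal δ) :
    ν.real O ≤ c * μ.real O + δ := by
  have hfin : ENNReal.ofReal c * μ O + ENNReal.ofReal δ ≠ ⊤ := by finiteness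
  have := ENNReal.toReal_mono hfin h
  rwa [ENNReal.toReal_add (by finiteness) ENNReal.ofReal_ne_top, ENNReal.toReal_mul,
    ENNReal.toReal_ofReal hc, ENNReal.toReal_ofReal hδ] at this

lemma integral_eq_intervalIntegral_measureReal_lt (μ : Measure Z) [IsFiniteMeasure μ]
    {f : Z → ℝ} (hf : Measurable f) (hf01 : ∀ z, f z ∈ Set.Icc (0 : ℝ) 1) :
    ∫ z, f z ∂μ = ∫ t in (0 : ℝ)..1, μ.real {z | t < f z} := by
  have hint : Integrable f μ :=
    .of_bound hf.aestronglyMeasurable 1 <| .of_forall fun z => by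
      rw [norm_of_nonneg (hf01 z).1]; exact (hf01 z).2
  rw [hint.integral_eq_integral_meas_lt (.of_forall fun z => (hf01 z).1),
    intervalIntegral.integral_of_le zero_le_one,
    setIntegral_eq_of_subset_of_forall_sdiff_eq_zero measurableSet_Ioi Set.Ioc_subset_Ioi_self]
  rintro t ⟨ht0, ht1⟩
  have hempty : {z | t < f z} = ∅ :=
    Set.eq_empty_of_forall_notMem fun z hz =>
      ht1 ⟨ht0, ((hf01 z).2.trans_lt' hz).le⟩
  simp [hempty]

lemma integral_le_mul_integral_add_of_measureReal_le {μ ν : Measure Z}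
    [IsFiniteMeasure μ] [IsFiniteMeasure ν] {c δ : ℝ}
    (h : ∀ O, MeasurableSet O → ν.real O ≤ c * μ.real O + δ)
    {f : Z → ℝ} (hf : Measurable f) (hf01 : ∀ z, f z ∈ Set.Icc (0 : ℝ) 1) :
    ∫ z, f z ∂ν ≤ c * ∫ z, f z ∂μ + δ := by
  have hanti : ∀ m : Measure Z, [IsFiniteMeasure m] → Antitone fun t => m.real {z | t < f z} :=
    fun m _ s t hst => measureReal_mono fun z (hz : t < f z) => hst.trans_lt hz
  have hsuper : ∀ t, MeasurableSet {z | t < f z} := fun t => measurableSet_lt measurable_const hf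
  rw [integral_eq_intervalIntegral_measureReal_lt μ hf hf01,
    integral_eq_intervalIntegral_measureReal_lt ν hf hf01]
  calc ∫ t in (0 : ℝ)..1, ν.real {z | t < f z}
      ≤ ∫ t in (0 : ℝ)..1, (c * μ.real {z | t < f z} + δ) :=
        intervalIntegral.integral_mono_on zero_le_one (hanti ν).intervalIntegrable
          (((hanti μ).intervalIntegrable.const_mul c).add intervalIntegrable_const)
          fun t _ => h _ (hsuper t)
    _ = (c * ∫ t in (0 : ℝ)..1, μ.real {z | t < f z}) + δ := by
        rw [intervalIntegral.integral_add ((hanti μ).intervalIntegrable.const_mul c)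
          intervalIntegrable_const, intervalIntegral.integral_const_mul]
        simp

end MeasureTheory

lemma one_sub_mul_sub_le_of_le_exp_mul_add {ε δ x y : ℝ} (hε : 0 ≤ ε) (hδ : 0 ≤ δ)
    (hx : 0 ≤ x) (h : x ≤ exp ε * y + δ) :
    (1 - ε) * x - δ ≤ y := by
  have hexp : 1 - ε ≤ exp (-ε) := by linarith [add_one_le_exp (-ε)]
  have hexp_le_one : exp (-ε) ≤ 1 := exp_le_one_iff.mpr (by linarith)
  calc (1 - ε) * x - δ
      ≤ exp (-ε) * (exp ε * y + δ) - δ := by gcongr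
    _ = y + exp (-ε) * δ - δ := by
        rw [mul_add, ← mul_assoc, ← exp_add, neg_add_cancel, exp_zero, one_mul]
    _ ≤ y := by linarith [mul_le_of_le_one_left hδ hexp_le_one]

theorem dp_implies_truthful_general
    {Z : Type*} [MeasurableSpace Z] {𝒰 : Type*} {n : ℕ}
    (M : (Fin n → 𝒰) → Measure Z)
    (hprob : ∀ u, IsProbabilityMeasure (M u))
    (ε δ : ℝ) (hε : 0 ≤ ε) (hδ : 0 ≤ δ)
    (hDP : ∀ u u' : Fin n → 𝒰, (∃ i : Fin n, ∀ j : Fin n, j ≠ i → u j = u' j) →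
      ∀ O : Set Z, MeasurableSet O →
        M u O ≤ ENNReal.ofReal (Real.exp ε) * M u' O + ENNReal.ofReal δ)
    (i : Fin n) (Ui : Z → ℝ) (hUmeas : Measurable Ui)
    (hU01 : ∀ z, Ui z ∈ Set.Icc (0 : ℝ) 1)
    (u : Fin n → 𝒰) (u'i : 𝒰) :
    ∫ z, Ui z ∂(M u) ≥ (1 - ε) * ∫ z, Ui z ∂(M (Function.update u i u'i)) - δ := by
  have := hprob u
  have := hprob (Function.update u i u'i)
  have hevents : ∀ O, MeasurableSet O →
      (M (Function.update u i u'i)).real O ≤ exp ε * (M u).real O + δ := fun O hO =>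
    measureReal_le_mul_add_of_le (exp_pos ε).le hδ
      (hDP _ _ ⟨i, fun j hj => Function.update_of_ne hj _ _⟩ O hO)
  exact one_sub_mul_sub_le_of_le_exp_mul_add hε hδ (integral_nonneg fun z => (hU01 z).1)
    (integral_le_mul_integral_add_of_measureReal_le hevents hUmeas hU01)

/-- An (ε, δ)-differentially private mechanism with ε, δ < 1 is
(ε, δ)-truthful: for every agent i, true utility Uᵢ : Z → [0,1], misreport u'ᵢ and
profile u₋ᵢ of other reports, E[Uᵢ(M(uᵢ, u₋ᵢ))] ≥ (1−ε)·E[Uᵢ(M(u'ᵢ, u₋ᵢ))] − δ. -/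
theorem dp_implies_truthful
    {Z : Type*} [MeasurableSpace Z] {𝒰 : Type*} {n : ℕ}
    (M : (Fin n → 𝒰) → Measure Z)
    (hprob : ∀ u, IsProbabilityMeasure (M u))
    (ε δ : ℝ) (hε : 0 ≤ ε) (hε1 : ε < 1) (hδ : 0 ≤ δ) (hδ1 : δ < 1)
    (hDP : ∀ u u' : Fin n → 𝒰, (∃ i : Fin n, ∀ j : Fin n, j ≠ i → u j = u' j) →
      ∀ O : Set Z, MeasurableSet O →
        M u O ≤ ENNReal.ofReal (Real.exp ε) * M u' O + ENNReal.ofReal δ)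
    (i : Fin n) (Ui : Z → ℝ) (hUmeas : Measurable Ui)
    (hU01 : ∀ z, Ui z ∈ Set.Icc (0 : ℝ) 1)
    (u : Fin n → 𝒰) (u'i : 𝒰) :
    ∫ z, Ui z ∂(M u) ≥ (1 - ε) * ∫ z, Ui z ∂(M (Function.update u i u'i)) - δ :=
  dp_implies_truthful_general M hprob ε δ hε hδ hDP i Ui hUmeas hU01 u u'i
end

section
/- Let each U_i: Z → ℝ be differentiable, concave, and strictly positive on a convex set Z ⊆ ℝ^m. If z* maximizes ∑_i log(U_i(z)) over Z, then z* is a core outcome: there is no subset A of agents and z' ∈ Z such that (|A|/n)·U_i(z') ≥ U_i(z*) for all i ∈ A with at least one strict inequality. -/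
open Real Finset

/-!
Compare `z*` with a point `z'` along the segment `(1 - t) z* + t z'`. By concavity each
`U i` lies above its chord, so `t ↦ ∑ i, log ((1 - t) U i z* + t U i z')` is bounded by the
objective along the segment, hence maximal at `t = 0` on `[0, 1]`. Its right derivative at `0`,
`∑ i, (U i z' / U i z* - 1)`, is therefore nonpositive: `∑ i, U i z' / U i z* ≤ n`. A blocking
coalition `A` would have `U i z' / U i z* ≥ n / |A|` on `A`, strictly somewhere, and these
ratios alone would already sum to more than `n`.
-/

lemma HasDerivAt.nonpos_of_isMaxOn_Icc {f : ℝ → ℝ} {f' a b : ℝ} (hab : a < b)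
    (hf : HasDerivAt f f' a) (hmax : IsMaxOn f (Set.Icc a b) a) : f' ≤ 0 := by
  have hdir : b - a ∈ posTangentConeAt (Set.Icc a b) a :=
    sub_mem_posTangentConeAt_of_segment_subset (segment_eq_Icc hab.le).subset
  have hslope := hmax.localize.hasFDerivWithinAt_nonpos hf.hasFDerivAt.hasFDerivWithinAt hdir
  rw [ContinuousLinearMap.toSpanSingleton_apply, smul_eq_mul] at hslope
  exact nonpos_of_mul_nonpos_right hslope (sub_pos.mpr hab)

lemma hasDerivAt_sum_log_lineMap {ι : Type*} (s : Finset ι) {u v : ι → ℝ}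
    (hu : ∀ i ∈ s, u i ≠ 0) :
    HasDerivAt (fun t => ∑ i ∈ s, log ((1 - t) * u i + t * v i))
      (∑ i ∈ s, (v i - u i) / u i) 0 := by
  refine HasDerivAt.fun_sum fun i hi => ?_
  have hline : HasDerivAt (fun t : ℝ => (1 - t) * u i + t * v i) (v i - u i) 0 := by
    rw [show (fun t : ℝ => (1 - t) * u i + t * v i) = fun t => u i + t * (v i - u i) from
      funext fun t => by ring]
    simpa using ((hasDerivAt_id' (0 : ℝ)).mul_const (v i - u i)).const_add (u i)
  simpa using hline.log (by simpa using hu i hi)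

lemma sum_div_le_card_of_isMaxOn_sum_log {ι E : Type*} [Fintype ι] [AddCommGroup E]
    [Module ℝ E] {s : Set E} (hs : Convex ℝ s) {U : ι → E → ℝ}
    (hconc : ∀ i, ConcaveOn ℝ s (U i)) {x y : E} (hx : x ∈ s) (hy : y ∈ s)
    (hUx : ∀ i, 0 < U i x) (hUy : ∀ i, 0 < U i y)
    (hmax : IsMaxOn (fun z => ∑ i, log (U i z)) s x) :
    ∑ i, U i y / U i x ≤ Fintype.card ι := by
  have hchord : IsMaxOn (fun t => ∑ i, log ((1 - t) * U i x + t * U i y)) (Set.Icc 0 1) 0 := by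
    rintro t ⟨ht0, ht1⟩
    have hseg : (1 - t) • x + t • y ∈ s := hs hx hy (sub_nonneg.mpr ht1) ht0 (by ring)
    calc ∑ i, log ((1 - t) * U i x + t * U i y)
        ≤ ∑ i, log (U i ((1 - t) • x + t • y)) := by
          refine sum_le_sum fun i _ => log_le_log ?_ ?_
          · simpa using convex_Ioi (0 : ℝ) (hUx i) (hUy i) (sub_nonneg.mpr ht1) ht0 (by ring)
          · simpa using (hconc i).2 hx hy (sub_nonneg.mpr ht1) ht0 (by ring)
      _ ≤ ∑ i, log (U i x) := hmax hseg
      _ = ∑ i, log ((1 - 0) * U i x + 0 * U i y) := by simp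
  have hderiv := (hasDerivAt_sum_log_lineMap univ fun i _ => (hUx i).ne').nonpos_of_isMaxOn_Icc
    zero_lt_one hchord
  have hratio : ∀ i, (U i y - U i x) / U i x = U i y / U i x - 1 := fun i => by
    rw [sub_div, div_self (hUx i).ne']
  simp only [hratio, sum_sub_distrib, sum_const, card_univ, nsmul_eq_mul, mul_one] at hderiv
  linarith

lemma not_exists_lt_of_sum_div_le_card {ι : Type*} [Fintype ι] {u v : ι → ℝ}
    (hu : ∀ i, 0 < u i) (hv : ∀ i, 0 ≤ v i) (hsum : ∑ i, v i / u i ≤ Fintype.card ι)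
    {A : Finset ι} (hge : ∀ i ∈ A, u i ≤ (#A / Fintype.card ι) * v i) :
    ¬ ∃ i ∈ A, u i < (#A / Fintype.card ι) * v i := by
  rintro ⟨j, hjA, hj⟩
  set c : ℝ := #A / Fintype.card ι
  have hcard : (Fintype.card ι : ℝ) ≠ 0 := by
    exact_mod_cast (Fintype.card_pos_iff.mpr ⟨j⟩).ne'
  have hc : 0 ≤ c := by positivity
  have hone : ∀ i ∈ A, 1 ≤ c * (v i / u i) := fun i hi => by
    rw [← mul_div_assoc, one_le_div (hu i)]; exact hge i hi
  have hlt : (#A : ℝ) < ∑ i ∈ A, c * (v i / u i) := by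
    simpa using sum_lt_sum hone ⟨j, hjA, by rw [← mul_div_assoc, one_lt_div (hu j)]; exact hj⟩
  have hle : ∑ i ∈ A, c * (v i / u i) ≤ #A := calc
    ∑ i ∈ A, c * (v i / u i) ≤ ∑ i, c * (v i / u i) :=
      sum_le_sum_of_subset_of_nonneg (subset_univ A) fun i _ _ =>
        mul_nonneg hc (div_nonneg (hv i) (hu i).le)
    _ = c * ∑ i, v i / u i := (mul_sum _ _ _).symm
    _ ≤ c * Fintype.card ι := mul_le_mul_of_nonneg_left hsum hc
    _ = #A := div_mul_cancel₀ _ hcard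
  linarith

theorem mnw_is_core_general
    {m n : ℕ} (Z : Set (EuclideanSpace ℝ (Fin m))) (hZconv : Convex ℝ Z)
    (U : Fin n → EuclideanSpace ℝ (Fin m) → ℝ)
    (hconc : ∀ i, ConcaveOn ℝ Z (U i))
    (hpos : ∀ i, ∀ z ∈ Z, 0 < U i z)
    (zstar : EuclideanSpace ℝ (Fin m)) (hzstar : zstar ∈ Z)
    (hmax : ∀ z ∈ Z, ∑ i, Real.log (U i z) ≤ ∑ i, Real.log (U i zstar)) :
    ¬ ∃ (A : Finset (Fin n)) (z' : EuclideanSpace ℝ (Fin m)), z' ∈ Z ∧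
        (∀ i ∈ A, ((A.card : ℝ) / n) * U i z' ≥ U i zstar) ∧
        (∃ i ∈ A, ((A.card : ℝ) / n) * U i z' > U i zstar) := by
  rintro ⟨A, z', hz', hge, hlt⟩
  have hsum := sum_div_le_card_of_isMaxOn_sum_log hZconv hconc hzstar hz'
    (fun i => hpos i zstar hzstar) (fun i => hpos i z' hz') hmax
  have hcore := not_exists_lt_of_sum_div_le_card (A := A) (fun i => hpos i zstar hzstar)
    (fun i => (hpos i z' hz').le) hsum
  rw [Fintype.card_fin] at hcore
  exact hcore hge hlt

/-- If each Uᵢ is differentiable, concave, and strictly positive on a convex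
set Z, and z* maximizes ∑ᵢ log(Uᵢ(z)) over Z, then z* is a core outcome: no subset A of
agents and z' ∈ Z satisfy (|A|/n)·Uᵢ(z') ≥ Uᵢ(z*) for all i ∈ A with one strict inequality. -/
theorem mnw_is_core
    {m n : ℕ} (Z : Set (EuclideanSpace ℝ (Fin m))) (hZconv : Convex ℝ Z)
    (U : Fin n → EuclideanSpace ℝ (Fin m) → ℝ)
    (hdiff : ∀ i, DifferentiableOn ℝ (U i) Z)
    (hconc : ∀ i, ConcaveOn ℝ Z (U i))
    (hpos : ∀ i, ∀ z ∈ Z, 0 < U i z)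
    (zstar : EuclideanSpace ℝ (Fin m)) (hzstar : zstar ∈ Z)
    (hmax : ∀ z ∈ Z, ∑ i, Real.log (U i z) ≤ ∑ i, Real.log (U i zstar)) :
    ¬ ∃ (A : Finset (Fin n)) (z' : EuclideanSpace ℝ (Fin m)), z' ∈ Z ∧
        (∀ i ∈ A, ((A.card : ℝ) / n) * U i z' ≥ U i zstar) ∧
        (∃ i ∈ A, ((A.card : ℝ) / n) * U i z' > U i zstar) :=
  mnw_is_core_general Z hZconv U hconc hpos zstar hzstar hmax
end

section
/- Let ε, δ ≥ 0 and z ∈ Z. If for every z' ∈ Z we have (1/n)·∑_{i=1}^n U_i(z')/(U_i(z) + δ/(1+ε)) ≤ 1 + ε, then z is an (ε, δ)-core outcome: there exists no set A ⊆ {1,...,n} and no z' ∈ Z such that (|A|/n)·U_i(z') ≥ (1+ε)·U_i(z) + δ for all i ∈ A with at least one strict inequality. -/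
/-!
If a coalition `A` blocks `z` via `z'`, then, writing `wᵢ = Uᵢ(z) + δ/(1+ε)` so that
`(1+ε)·wᵢ = (1+ε)·Uᵢ(z) + δ`, every member of `A` has `Uᵢ(z')/wᵢ ≥ (1+ε)·n/|A|`, strictly for one
of them. Summing over the `|A|` members gives `∑_{i∈A} Uᵢ(z')/wᵢ > (1+ε)·n`, and the remaining
terms are nonnegative, contradicting the hypothesis at `z'`.
-/

open Finset

theorem Finset.card_mul_lt_sum {ι : Type*} {A : Finset ι} {c : ℝ} {f : ι → ℝ}
    (hle : ∀ i ∈ A, c ≤ f i) (hlt : ∃ i ∈ A, c < f i) : #A * c < ∑ i ∈ A, f i := by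
  simpa only [sum_const, nsmul_eq_mul] using sum_lt_sum hle hlt

theorem mul_lt_sum_div_of_card_div_mul_ge {ι : Type*} {A : Finset ι} {N r : ℝ} (hN : 0 < N)
    {u w : ι → ℝ} (hw : ∀ i ∈ A, 0 < w i)
    (hle : ∀ i ∈ A, (#A / N) * u i ≥ r * w i) (hlt : ∃ i ∈ A, (#A / N) * u i > r * w i) :
    r * N < ∑ i ∈ A, u i / w i := by
  obtain ⟨i₀, hi₀, hi₀lt⟩ := hlt
  have hA : (0 : ℝ) < #A := by exact_mod_cast card_pos.mpr ⟨i₀, hi₀⟩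
  have ht : (0 : ℝ) < #A / N := div_pos hA hN
  calc r * N = #A * (r / (#A / N)) := by field_simp
    _ < ∑ i ∈ A, u i / w i := by
      refine card_mul_lt_sum (fun i hi => ?_) ⟨i₀, hi₀, ?_⟩
      · rw [div_le_div_iff₀ ht (hw i hi), mul_comm (u i)]
        exact hle i hi
      · rw [div_lt_div_iff₀ ht (hw i₀ hi₀), mul_comm (u i₀)]
        exact hi₀lt

theorem mnw_approx_core_general
    {Z : Type*} {n : ℕ} (U : Fin n → Z → ℝ) (hU : ∀ i z, 0 ≤ U i z)
    (ε δ : ℝ) (hε : 0 ≤ ε)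
    (F : Set Z) (z : Z)
    (hden : ∀ i, 0 < U i z + δ / (1 + ε))
    (h : ∀ z' ∈ F, (1 / (n : ℝ)) * ∑ i, U i z' / (U i z + δ / (1 + ε)) ≤ 1 + ε) :
    ¬ ∃ (A : Finset (Fin n)) (z' : Z), z' ∈ F ∧
        (∀ i ∈ A, ((A.card : ℝ) / n) * U i z' ≥ (1 + ε) * U i z + δ) ∧
        (∃ i ∈ A, ((A.card : ℝ) / n) * U i z' > (1 + ε) * U i z + δ) := by
  rintro ⟨A, z', hz', hle, i₀, hi₀, hlt⟩
  have hn : (0 : ℝ) < n := by exact_mod_cast i₀.pos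
  have hw : ∀ i, (1 + ε) * (U i z + δ / (1 + ε)) = (1 + ε) * U i z + δ := fun i => by
    rw [mul_add, mul_div_cancel₀ _ (by linarith)]
  have hA : (1 + ε) * n < ∑ i ∈ A, U i z' / (U i z + δ / (1 + ε)) :=
    mul_lt_sum_div_of_card_div_mul_ge hn (fun i _ => hden i)
      (fun i hi => hw i ▸ hle i hi) ⟨i₀, hi₀, hw i₀ ▸ hlt⟩
  have hsub : ∑ i ∈ A, U i z' / (U i z + δ / (1 + ε)) ≤ ∑ i, U i z' / (U i z + δ / (1 + ε)) :=
    sum_le_sum_of_subset_of_nonneg (subset_univ A)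
      fun i _ _ => div_nonneg (hU i z') (hden i).le
  have hF := h z' hz'
  rw [one_div, inv_mul_le_iff₀ hn] at hF
  linarith

/-- If (1/n)·∑ᵢ Uᵢ(z')/(Uᵢ(z) + δ/(1+ε)) ≤ 1 + ε for all z' ∈ Z,
then z is an (ε, δ)-core outcome. -/
theorem mnw_approx_core
    {Z : Type*} {n : ℕ} (U : Fin n → Z → ℝ) (hU : ∀ i z, 0 ≤ U i z)
    (ε δ : ℝ) (hε : 0 ≤ ε) (hδ : 0 ≤ δ)
    (F : Set Z) (z : Z) (hz : z ∈ F)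
    (hden : ∀ i, 0 < U i z + δ / (1 + ε))
    (h : ∀ z' ∈ F, (1 / (n : ℝ)) * ∑ i, U i z' / (U i z + δ / (1 + ε)) ≤ 1 + ε) :
    ¬ ∃ (A : Finset (Fin n)) (z' : Z), z' ∈ F ∧
        (∀ i ∈ A, ((A.card : ℝ) / n) * U i z' ≥ (1 + ε) * U i z + δ) ∧
        (∃ i ∈ A, ((A.card : ℝ) / n) * U i z' > (1 + ε) * U i z + δ) :=
  mnw_approx_core_general U hU ε δ hε F z hden h
end
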